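/- arXiv:1411.7696 — 3 statements merged into one kernel-verified Lean document; each statement's English description precedes it below -/
import Mathlib

section
/- Let f ∈ ℝ[X] be a Morse polynomial function in n variables such that f(x) ≥ 0 for every x in some neighborhood U of the origin 0 ∈ ℝⁿ and f⁻¹(0) = {0}. Then f, regarded as an element of ℝ[[X]] under the natural inclusion ℝ[X] ⊆ ℝ[[X]], is a finite sum of squares of formal power series, i.e. f ∈ Σℝ[[X]]². -/
/-!
If `f(0) > 0`, then `f` is a unit of `ℝ[[X]]` with positive constant term, and the binomial series
of `(1 + X) ^ (1/2)` provides a square root. Otherwise `0` is a local minimum of `f`. Write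
`f = f(0) + ∑ ∂ᵢf(0) Xᵢ + Xᵀ H X` with `H` a symmetric matrix of polynomials. Restricting `f` to
lines through `0` shows that the gradient vanishes and that `H(0)` is positive semidefinite; as the
Hessian at `0` is `2 H(0)`, the Morse condition makes `H(0)` positive definite. Over `ℝ[[X]]` the
form `Xᵀ H X` is then a sum of squares by Cholesky elimination: the pivot `H₀₀` has positive
constant term, hence is the square of a unit, and its Schur complement is again positive definite
at `0`.
-/

open MvPolynomial

/-- The Hessian matrix of a polynomial `f` at a point `p`. -/
noncomputable def hessian (n : ℕ) (f : MvPolynomial (Fin n) ℝ) (p : Fin n → ℝ) :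
    Matrix (Fin n) (Fin n) ℝ :=
  fun i j => eval p (pderiv j (pderiv i f))

/-- A polynomial is Morse if its Hessian matrix is invertible at every critical point. -/
def IsMorse (n : ℕ) (f : MvPolynomial (Fin n) ℝ) : Prop :=
  ∀ p : Fin n → ℝ, (∀ i, eval p (pderiv i f) = 0) → (hessian n f p).det ≠ 0

open Filter Topology Matrix

theorem eq_zero_and_nonneg_of_isLocalMin_mul_add_sq_mul {b : ℝ} {g : ℝ → ℝ}
    (hg : ContinuousAt g 0) (h : IsLocalMin (fun t => b * t + t ^ 2 * g t) 0) :
    b = 0 ∧ 0 ≤ g 0 := by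
  have hnonneg : ∀ᶠ t in 𝓝 0, 0 ≤ t * (b + t * g t) := by
    filter_upwards [h] with t ht
    linarith [ht.trans_eq (by ring : b * t + t ^ 2 * g t = t * (b + t * g t))]
  have hslope : Tendsto (fun t => b + t * g t) (𝓝 0) (𝓝 b) := by
    have hcont : ContinuousAt (fun t => b + t * g t) 0 := by fun_prop
    simpa using hcont.tendsto
  have hb_nonneg : 0 ≤ b :=
    ge_of_tendsto (hslope.mono_left (nhdsWithin_le_nhds (s := Set.Ioi 0))) <| by
      filter_upwards [nhdsWithin_le_nhds hnonneg, self_mem_nhdsWithin] with t ht (htpos : 0 < t)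
      exact nonneg_of_mul_nonneg_right (by linarith) htpos
  have hb_nonpos : b ≤ 0 :=
    le_of_tendsto (hslope.mono_left (nhdsWithin_le_nhds (s := Set.Iio 0))) <| by
      filter_upwards [nhdsWithin_le_nhds hnonneg, self_mem_nhdsWithin] with t ht (htneg : t < 0)
      exact nonpos_of_mul_nonneg_right (by linarith) htneg
  have hb : b = 0 := le_antisymm hb_nonpos hb_nonneg
  refine ⟨hb, ge_of_tendsto (hg.tendsto.mono_left (nhdsWithin_le_nhds (s := {0}ᶜ))) ?_⟩
  filter_upwards [nhdsWithin_le_nhds hnonneg, self_mem_nhdsWithin] with t ht (ht0 : t ≠ 0)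
  rw [hb, zero_add, ← mul_assoc] at ht
  exact nonneg_of_mul_nonneg_right ht (mul_self_pos.mpr ht0)

namespace Matrix

variable {R : Type*} [CommRing R] {m : ℕ}

noncomputable def schurComplementHead (H : Matrix (Fin (m + 1)) (Fin (m + 1)) R) :
    Matrix (Fin m) (Fin m) R :=
  of fun i j => H i.succ j.succ - H i.succ 0 * Ring.inverse (H 0 0) * H 0 j.succ

theorem IsSymm.schurComplementHead {H : Matrix (Fin (m + 1)) (Fin (m + 1)) R} (hH : H.IsSymm) :
    H.schurComplementHead.IsSymm :=
  IsSymm.ext fun i j => by simp only [Matrix.schurComplementHead, of_apply, hH.apply]; ring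

theorem schurComplementHead_map {S : Type*} [CommRing S] (ε : R →+* S)
    {H : Matrix (Fin (m + 1)) (Fin (m + 1)) R} (hu : IsUnit (H 0 0)) :
    (H.map ε).schurComplementHead = H.schurComplementHead.map ε := by
  have hinv : ε (Ring.inverse (H 0 0)) = Ring.inverse (ε (H 0 0)) := by
    obtain ⟨u, hu⟩ := hu
    rw [← hu, Ring.inverse_unit]
    exact (Ring.inverse_unit (Units.map (ε : R →* S) u)).symm
  ext i j
  simp [Matrix.schurComplementHead, hinv]

theorem dotProduct_mulVec_eq_sq_add_schurComplementHead
    {H : Matrix (Fin (m + 1)) (Fin (m + 1)) R} (hH : H.IsSymm) (hu : IsUnit (H 0 0))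
    (x : Fin (m + 1) → R) :
    x ⬝ᵥ H *ᵥ x = H 0 0 * (x 0 + Ring.inverse (H 0 0) * (Fin.tail (H 0) ⬝ᵥ Fin.tail x)) ^ 2
      + Fin.tail x ⬝ᵥ H.schurComplementHead *ᵥ Fin.tail x := by
  set S := Fin.tail (H 0) ⬝ᵥ Fin.tail x
  have hS : ∑ i : Fin m, x i.succ * H i.succ 0 = S := by
    simp only [S, dotProduct, Fin.tail, ← hH.apply 0]
    exact Finset.sum_congr rfl fun i _ => mul_comm _ _
  have hS' : ∑ i : Fin m, H 0 i.succ * x i.succ = S := rfl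
  have hcross : ∑ i : Fin m, x i.succ * (H i.succ 0 * x 0) = x 0 * S := by
    rw [← hS, Finset.mul_sum]
    exact Finset.sum_congr rfl fun i _ => by ring
  have hrank_one : ∑ i : Fin m, x i.succ *
      ∑ j : Fin m, H i.succ 0 * Ring.inverse (H 0 0) * H 0 j.succ * x j.succ
      = Ring.inverse (H 0 0) * S * S := by
    have hinner (i : Fin m) :
        ∑ j : Fin m, H i.succ 0 * Ring.inverse (H 0 0) * H 0 j.succ * x j.succ
          = H i.succ 0 * Ring.inverse (H 0 0) * S := by
      simp only [S, dotProduct, Fin.tail, Finset.mul_sum, mul_assoc]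
    simp only [hinner, ← mul_assoc, ← Finset.sum_mul, hS]
    ring
  simp only [dotProduct, mulVec, Fin.sum_univ_succ, schurComplementHead, of_apply, Fin.tail,
    sub_mul, mul_sub, mul_add, Finset.sum_add_distrib, Finset.sum_sub_distrib, hcross, hrank_one,
    hS']
  linear_combination
    (-(2 * x 0 * S + Ring.inverse (H 0 0) * S * S)) * Ring.mul_inverse_cancel _ hu

section PosDef

variable {K : Type*} [Field K] [PartialOrder K] [StarRing K] [TrivialStar K]

theorem PosDef.schurComplementHead {A : Matrix (Fin (m + 1)) (Fin (m + 1)) K} (hA : A.PosDef) :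
    A.schurComplementHead.PosDef := by
  have hsymm : A.IsSymm := isHermitian_iff_isSymm.mp hA.isHermitian
  refine .of_dotProduct_mulVec_pos (isHermitian_iff_isSymm.mpr hsymm.schurComplementHead)
    fun v hv => ?_
  let w : Fin (m + 1) → K := Fin.cons (-(Ring.inverse (A 0 0) * (Fin.tail (A 0) ⬝ᵥ v))) v
  have hw0 : w 0 = -(Ring.inverse (A 0 0) * (Fin.tail (A 0) ⬝ᵥ v)) := rfl
  have hwt : Fin.tail w = v := rfl
  have hw : w ≠ 0 := fun h => hv (by rw [← hwt, h]; rfl)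
  have hpos := hA.dotProduct_mulVec_pos hw
  rw [star_trivial]
  rwa [star_trivial, dotProduct_mulVec_eq_sq_add_schurComplementHead hsymm
    hA.diag_pos.ne'.isUnit, hw0, hwt, neg_add_cancel, zero_pow two_ne_zero, mul_zero,
    zero_add] at hpos

theorem isSumSq_dotProduct_mulVec {R : Type*} [CommRing R] (ε : R →+* K)
    (hunit : ∀ r, ε r ≠ 0 → IsUnit r) (hsq : ∀ r, 0 < ε r → IsSquare r) :
    ∀ {m : ℕ} {H : Matrix (Fin m) (Fin m) R}, H.IsSymm → (H.map ε).PosDef →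
      ∀ x : Fin m → R, IsSumSq (x ⬝ᵥ H *ᵥ x)
  | 0, _, _, _, x => by simp [dotProduct]
  | m + 1, H, hH, hpos, x => by
    have hε : 0 < ε (H 0 0) := hpos.diag_pos
    have hu : IsUnit (H 0 0) := hunit _ hε.ne'
    obtain ⟨s, hs⟩ := hsq _ hε
    have hschur : (H.schurComplementHead.map ε).PosDef := by
      rw [← schurComplementHead_map ε hu]
      exact hpos.schurComplementHead
    have hpivot (y : R) : H 0 0 * y ^ 2 = (s * y) * (s * y) := by rw [hs]; ring
    rw [dotProduct_mulVec_eq_sq_add_schurComplementHead hH hu, hpivot]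
    exact .sq_add _ (isSumSq_dotProduct_mulVec ε hunit hsq hH.schurComplementHead hschur _)

end PosDef

end Matrix

namespace MvPowerSeries

theorem isSquare_of_constantCoeff_eq_one {σ K : Type*} [Field K] [CharZero K]
    {u : MvPowerSeries σ K} (hu : constantCoeff u = 1) : IsSquare u := by
  have hsub : PowerSeries.HasSubst (u - 1) :=
    PowerSeries.HasSubst.of_constantCoeff_zero (by simp [hu])
  have hsqrt : PowerSeries.binomialSeries K (2⁻¹ : K) * PowerSeries.binomialSeries K (2⁻¹ : K)
      = 1 + PowerSeries.X := by
    rw [← PowerSeries.binomialSeries_add, ← two_mul, mul_inv_cancel₀ two_ne_zero, ← Nat.cast_one,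
      PowerSeries.binomialSeries_nat, pow_one]
  refine ⟨PowerSeries.subst (u - 1) (PowerSeries.binomialSeries K (2⁻¹ : K)), ?_⟩
  rw [← PowerSeries.subst_mul hsub, hsqrt, PowerSeries.subst_add hsub, PowerSeries.subst_X hsub,
    ← PowerSeries.coe_substAlgHom hsub, map_one]
  ring

theorem isSquare_of_constantCoeff_pos {σ : Type*} {u : MvPowerSeries σ ℝ}
    (hu : 0 < constantCoeff u) : IsSquare u := by
  obtain ⟨s, hs⟩ := isSquare_of_constantCoeff_eq_one (u := C (constantCoeff u)⁻¹ * u)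
    (by simp [hu.ne'])
  refine ⟨C √(constantCoeff u) * s, ?_⟩
  calc u = C (√(constantCoeff u) * √(constantCoeff u)) * (C (constantCoeff u)⁻¹ * u) := by
        rw [Real.mul_self_sqrt hu.le, ← mul_assoc, ← map_mul, mul_inv_cancel₀ hu.ne', map_one,
          one_mul]
    _ = _ := by rw [hs, map_mul]; ring

end MvPowerSeries

namespace MvPolynomial

variable {σ R : Type*} [CommRing R]

theorem constantCoeff_coe (p : MvPolynomial σ R) :
    MvPowerSeries.constantCoeff (p : MvPowerSeries σ R) = eval 0 p := by
  rw [eval_zero, ← MvPowerSeries.coeff_zero_eq_constantCoeff_apply, coeff_coe, constantCoeff_eq]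

variable [Fintype σ]

theorem exists_eq_taylor_add_quadratic (f : MvPolynomial σ R) :
    ∃ H : Matrix σ σ (MvPolynomial σ R),
      f = C (eval 0 f) + ∑ i, C (eval 0 (pderiv i f)) * X i + X ⬝ᵥ H *ᵥ X := by
  classical
  induction f using MvPolynomial.induction_on with
  | C a => exact ⟨0, by simp⟩
  | add p q hp hq =>
    obtain ⟨Hp, hp⟩ := hp
    obtain ⟨Hq, hq⟩ := hq
    refine ⟨Hp + Hq, ?_⟩
    conv_lhs => rw [hp, hq]
    simp only [map_add, add_mulVec, dotProduct_add, add_mul, Finset.sum_add_distrib]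
    ring
  | mul_X p k hp =>
    obtain ⟨H, hp⟩ := hp
    refine ⟨vecMulVec (fun i => C (eval 0 (pderiv i p))) (Pi.single k 1)
      + (X k : MvPolynomial σ R) • H, ?_⟩
    have hlinear (i : σ) : (C (eval 0 (pderiv i (p * X k))) * X i : MvPolynomial σ R)
        = Pi.single (M := fun _ => MvPolynomial σ R) k (C (eval 0 p) * X k) i := by
      by_cases h : i = k
      · subst h; simp
      · simp [h, Derivation.leibniz, pderiv_X_of_ne (Ne.symm h)]
    conv_lhs => rw [hp]
    simp only [hlinear, Finset.sum_pi_single', Finset.mem_univ, if_true, eval_mul, eval_X,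
      Pi.zero_apply, mul_zero, map_zero, zero_add, add_mulVec, smul_mulVec, vecMulVec_mulVec,
      single_dotProduct, dotProduct_add, dotProduct_smul]
    rw [add_mul, add_mul, add_assoc, op_smul_eq_mul, one_mul, smul_eq_mul, mul_comm (X k),
      dotProduct_comm X (fun i => C (eval 0 (pderiv i p)))]
    rfl

theorem exists_isSymm_eq_taylor_add_quadratic [Invertible (2 : R)] (f : MvPolynomial σ R) :
    ∃ H : Matrix σ σ (MvPolynomial σ R), H.IsSymm ∧
      f = C (eval 0 f) + ∑ i, C (eval 0 (pderiv i f)) * X i + X ⬝ᵥ H *ᵥ X := by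
  obtain ⟨H, hf⟩ := exists_eq_taylor_add_quadratic f
  refine ⟨(⅟2 : R) • (H + Hᵀ), (isSymm_add_transpose_self H).smul _, ?_⟩
  have htranspose : X ⬝ᵥ Hᵀ *ᵥ X = X ⬝ᵥ H *ᵥ X := by
    rw [mulVec_transpose, dotProduct_comm, dotProduct_mulVec]
  rw [smul_mulVec, dotProduct_smul, add_mulVec, dotProduct_add, htranspose, ← two_smul R,
    smul_smul, invOf_mul_self, one_smul]
  exact hf

theorem eval_dotProduct_mulVec_X (H : Matrix σ σ (MvPolynomial σ R)) (x : σ → R) :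
    eval x (X ⬝ᵥ H *ᵥ X) = x ⬝ᵥ H.map (eval x) *ᵥ x := by
  simp [RingHom.map_dotProduct, Function.comp_def, RingHom.map_mulVec]

theorem eval_zero_pderiv_pderiv_dotProduct_mulVec_X (H : Matrix σ σ (MvPolynomial σ R))
    (k l : σ) :
    eval 0 (pderiv l (pderiv k (X ⬝ᵥ H *ᵥ X))) = eval 0 (H l k) + eval 0 (H k l) := by
  classical
  simp [dotProduct, mulVec, Finset.mul_sum, Derivation.leibniz, Pi.single_apply,
    apply_ite constantCoeff, apply_ite (pderiv l), Finset.sum_add_distrib]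

theorem coe_dotProduct_mulVec_X (H : Matrix σ σ (MvPolynomial σ R)) :
    ((X ⬝ᵥ H *ᵥ X : MvPolynomial σ R) : MvPowerSeries σ R)
      = MvPowerSeries.X ⬝ᵥ H.map (↑) *ᵥ MvPowerSeries.X := by
  simp only [← coeToMvPowerSeries.ringHom_apply, RingHom.map_dotProduct, Function.comp_def,
    RingHom.map_mulVec]
  simp only [coeToMvPowerSeries.ringHom_apply, coe_X]
  rfl

theorem linear_eq_zero_and_quadratic_nonneg_of_isLocalMin {L : σ → ℝ}
    {H : Matrix σ σ (MvPolynomial σ ℝ)}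
    (h : IsLocalMin (fun x => eval x (∑ i, C (L i) * X i + X ⬝ᵥ H *ᵥ X)) 0) :
    L = 0 ∧ ∀ v, 0 ≤ v ⬝ᵥ H.map (eval 0) *ᵥ v := by
  have hline (v : σ → ℝ) : L ⬝ᵥ v = 0 ∧ 0 ≤ v ⬝ᵥ H.map (eval 0) *ᵥ v := by
    have hmin : IsLocalMin
        (fun t : ℝ => (L ⬝ᵥ v) * t + t ^ 2 * (v ⬝ᵥ H.map (eval (t • v)) *ᵥ v)) 0 := by
      have h' : IsLocalMin (fun x => eval x (∑ i, C (L i) * X i + X ⬝ᵥ H *ᵥ X))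
          ((0 : ℝ) • v) := by rwa [zero_smul]
      convert h'.comp_continuous (g := fun t : ℝ => t • v) (b := 0) (by fun_prop) using 2 with t
      have hlin : (L ⬝ᵥ v) * t = ∑ i, L i * (t * v i) := by
        rw [dotProduct, Finset.sum_mul]
        exact Finset.sum_congr rfl fun i _ => by ring
      simp only [Function.comp_apply, map_add, map_sum, map_mul, eval_C, eval_X, Pi.smul_apply,
        smul_eq_mul, eval_dotProduct_mulVec_X, mulVec_smul, dotProduct_smul, smul_dotProduct,
        hlin]
      ring
    have hcont : ContinuousAt (fun t : ℝ => v ⬝ᵥ H.map (eval (t • v)) *ᵥ v) 0 :=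
      (continuous_const.dotProduct (.matrix_mulVec (continuous_pi fun i => continuous_pi fun j =>
        (continuous_eval (H i j)).comp (by fun_prop)) continuous_const)).continuousAt
    simpa using eq_zero_and_nonneg_of_isLocalMin_mul_add_sq_mul hcont hmin
  exact ⟨dotProduct_self_eq_zero.mp (hline L).1, fun v => (hline v).2⟩

end MvPolynomial

theorem hessian_zero_dotProduct_mulVec_X {n : ℕ}
    {H : Matrix (Fin n) (Fin n) (MvPolynomial (Fin n) ℝ)} (hH : H.IsSymm) :
    hessian n (X ⬝ᵥ H *ᵥ X) 0 = (2 : ℝ) • H.map (eval 0) := by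
  ext k l
  rw [hessian, eval_zero_pderiv_pderiv_dotProduct_mulVec_X, hH.apply, Matrix.smul_apply,
    map_apply, two_smul]

theorem nonneg_morse_near_zero_isSumSq_powerSeries_general
    (n : ℕ) (f : MvPolynomial (Fin n) ℝ)
    (hMorse : IsMorse n f)
    (U : Set (Fin n → ℝ)) (hU : U ∈ nhds (0 : Fin n → ℝ))
    (hnonneg : ∀ x ∈ U, 0 ≤ eval x f) :
    IsSumSq (f : MvPowerSeries (Fin n) ℝ) := by
  rcases (hnonneg 0 (mem_of_mem_nhds hU)).lt_or_eq with hpos | hf0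
  · exact (MvPowerSeries.isSquare_of_constantCoeff_pos (by rwa [constantCoeff_coe])).isSumSq
  have hmin : IsLocalMin (fun x => eval x f) 0 :=
    mem_of_superset hU fun x hx => show eval 0 f ≤ eval x f from hf0 ▸ hnonneg x hx
  obtain ⟨H, hH, hf⟩ := exists_isSymm_eq_taylor_add_quadratic f
  rw [← hf0, map_zero, zero_add] at hf
  rw [hf] at hmin
  obtain ⟨hgrad, hpsd⟩ := linear_eq_zero_and_quadratic_nonneg_of_isLocalMin hmin
  have hcrit : ∀ i, eval 0 (pderiv i f) = 0 := congrFun hgrad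
  simp only [hcrit, map_zero, zero_mul, Finset.sum_const_zero, zero_add] at hf
  have hdet : (H.map (eval 0)).det ≠ 0 := by
    have hhess := hMorse 0 hcrit
    rw [hf, hessian_zero_dotProduct_mulVec_X hH, det_smul] at hhess
    exact right_ne_zero_of_mul hhess
  have hposdef : (H.map (eval 0)).PosDef :=
    (PosSemidef.of_dotProduct_mulVec_nonneg (isHermitian_iff_isSymm.mpr (hH.map _))
      fun v => by simpa using hpsd v).posDef_iff_det_ne_zero.mpr hdet
  rw [hf, coe_dotProduct_mulVec_X]
  refine isSumSq_dotProduct_mulVec MvPowerSeries.constantCoeff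
    (fun r hr => MvPowerSeries.isUnit_iff_constantCoeff.mpr hr.isUnit)
    (fun r hr => MvPowerSeries.isSquare_of_constantCoeff_pos hr) (hH.map _) ?_ _
  simpa [Matrix.map_map, Function.comp_def, constantCoeff_coe] using hposdef

theorem nonneg_morse_near_zero_isSumSq_powerSeries
    (n : ℕ) (f : MvPolynomial (Fin n) ℝ)
    (hMorse : IsMorse n f)
    (U : Set (Fin n → ℝ)) (hU : U ∈ nhds (0 : Fin n → ℝ))
    (hnonneg : ∀ x ∈ U, 0 ≤ eval x f)
    (hzero : {x : Fin n → ℝ | eval x f = 0} = {0}) :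
    IsSumSq (f : MvPowerSeries (Fin n) ℝ) :=
  nonneg_morse_near_zero_isSumSq_powerSeries_general n f hMorse U hU hnonneg
end

section
/- Let m ≥ 3 and a ∈ ℝ. Then the polynomial h(x₁,…,x_m) = x₁² + ⋯ + x_m² + a x₁x₂⋯x_m, regarded as an element of ℝ[[x₁,…,x_m]], is a finite sum of squares of formal power series: h ∈ Σℝ[[x₁,…,x_m]]². -/
/-!
Completing the square in `x₁`, with `u = x₃ ⋯ x_m`,
`x₁² + x₂² + a u x₁ x₂ = (x₁ + (a/2) u x₂)² + x₂² (1 - (a²/4) u²)`.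
Since `m ≥ 3`, `u` has zero constant coefficient, so `1 - (a²/4) u²` has a power series square
root, namely the binomial series `(1 + X)^(1/2)` evaluated at `-(a²/4) u²`.
-/

open MvPolynomial

theorem MvPowerSeries.isSquare_one_add {σ A : Type*} [CommRing A] [Algebra ℚ A]
    {t : MvPowerSeries σ A} (ht : IsNilpotent (constantCoeff t)) : IsSquare (1 + t) := by
  have ht' : PowerSeries.HasSubst t := ht
  have hbin : PowerSeries.binomialSeries A (1 : ℚ) = 1 + PowerSeries.X := by
    simpa using PowerSeries.binomialSeries_nat (R := ℚ) (A := A) 1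
  refine ⟨(PowerSeries.binomialSeries A (1 / 2 : ℚ)).subst t, ?_⟩
  rw [← PowerSeries.subst_mul ht', ← PowerSeries.binomialSeries_add, add_halves, hbin,
    ← PowerSeries.coe_substAlgHom ht', map_add, map_one, PowerSeries.coe_substAlgHom,
    PowerSeries.subst_X ht']

theorem isSumSq_sq_add_sq_add_two_mul {R : Type*} [CommRing R] {x y u c : R}
    (h : IsSquare (1 - c ^ 2 * u ^ 2)) : IsSumSq (x ^ 2 + y ^ 2 + 2 * c * u * x * y) := by
  obtain ⟨g, hg⟩ := h
  have hsos : x ^ 2 + y ^ 2 + 2 * c * u * x * y =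
      (x + c * u * y) * (x + c * u * y) + ((y * g) * (y * g) + 0) := by
    linear_combination y ^ 2 * hg
  rw [hsos]
  exact .sq_add _ (.sq_add _ .zero)

theorem sum_sq_add_mul_monomial_isSumSq_powerSeries
    (m : ℕ) (hm : 3 ≤ m) (a : ℝ) :
    IsSumSq ((((∑ i, X i ^ 2) + C a * ∏ i, X i : MvPolynomial (Fin m) ℝ)) :
      MvPowerSeries (Fin m) ℝ) := by
  obtain ⟨k, rfl⟩ : ∃ k, m = k + 1 + 2 := ⟨m - 3, by omega⟩
  set x : Fin (k + 1 + 2) → MvPowerSeries (Fin (k + 1 + 2)) ℝ := MvPowerSeries.X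
  set u := ∏ i : Fin (k + 1), x i.succ.succ
  have hu : MvPowerSeries.constantCoeff u = 0 := by simp [u, x, Fin.prod_univ_succ]
  have hsplit : ((((∑ i, X i ^ 2) + C a * ∏ i, X i : MvPolynomial (Fin (k + 1 + 2)) ℝ)) :
      MvPowerSeries (Fin (k + 1 + 2)) ℝ) =
      (x 0 ^ 2 + x 1 ^ 2 + 2 * MvPowerSeries.C (a / 2) * u * x 0 * x 1) +
        ∑ i : Fin (k + 1), x i.succ.succ ^ 2 := by
    have hC : MvPowerSeries.C a = 2 * MvPowerSeries.C (σ := Fin (k + 1 + 2)) (a / 2) := by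
      rw [← map_ofNat MvPowerSeries.C 2, ← map_mul, mul_div_cancel₀ a two_ne_zero]
    rw [← coeToMvPowerSeries.ringHom_apply]
    simp only [map_add, map_mul, map_sum, map_prod, map_pow, coeToMvPowerSeries.ringHom_apply,
      coe_X, coe_C, x, u, hC, Fin.succ_zero_eq_one, Fin.sum_univ_succ (n := k + 2),
      Fin.sum_univ_succ (n := k + 1), Fin.prod_univ_succ (n := k + 2),
      Fin.prod_univ_succ (n := k + 1)]
    ring
  rw [hsplit]
  refine .add (isSumSq_sq_add_sq_add_two_mul ?_) (.sum_sq _ _)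
  rw [sub_eq_add_neg]
  exact MvPowerSeries.isSquare_one_add (by simp [hu])
end

section
/- Let G = {(1−x²)³} ⊆ ℝ[x], so that K_G = [−1,1]. The polynomial f = 1 − x² is nonnegative on [−1,1] and has exactly two zeros (x = ±1) in K_G, yet f does not belong to T_G = M_G = {s₀ + s₁(1−x²)³ : s₀, s₁ ∈ Σℝ[x]²}; that is, there exist no sums of squares s₀, s₁ ∈ Σℝ[x]² with 1 − x² = s₀ + s₁(1−x²)³. -/
/-!
Every element `s₀ + s₁ (1 - x²)³` of the quadratic module that vanishes at `x = 1` vanishes there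
to order at least two: `(1 - x²)³` has a triple root at `1`, and a sum of squares that vanishes
at a point is a sum of squares of polynomials vanishing at that point. But `1 - x²` has only a
simple root at `1`.
-/

open Polynomial

theorem IsSumSq.map {R S F : Type*} [NonAssocSemiring R] [NonAssocSemiring S]
    [FunLike F R S] [RingHomClass F R S] (f : F) {s : R} (hs : IsSumSq s) : IsSumSq (f s) := by
  induction hs with
  | zero => simp
  | sq_add a _ ih => simpa using ih.sq_add (f a)

section SumsOfSquares

variable {R : Type*} [CommRing R] [LinearOrder R] [IsStrictOrderedRing R]

theorem IsSumSq.eval_nonneg {s : R[X]} (hs : IsSumSq s) (x : R) : 0 ≤ s.eval x :=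
  (hs.map (evalRingHom x)).nonneg

theorem IsSumSq.sq_dvd_of_isRoot {s : R[X]} (hs : IsSumSq s) {a : R} (ha : s.IsRoot a) :
    (X - C a) ^ 2 ∣ s := by
  induction hs with
  | zero => simp
  | @sq_add p t ht ih =>
    have hsum : p.eval a * p.eval a + t.eval a = 0 := by simpa using ha
    obtain ⟨hp, ht0⟩ :=
      (add_eq_zero_iff_of_nonneg (mul_self_nonneg _) (ht.eval_nonneg a)).mp hsum
    have hXp : X - C a ∣ p := dvd_iff_isRoot.mpr (mul_self_eq_zero.mp hp)
    exact dvd_add (sq (X - C a) ▸ mul_dvd_mul hXp hXp) (ih ht0)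

theorem sq_dvd_of_eq_add_mul_pow {f g s₀ s₁ : R[X]} {a : R} {n : ℕ} (hs₀ : IsSumSq s₀)
    (hf : f.IsRoot a) (hg : g.IsRoot a) (hn : 2 ≤ n) (h : f = s₀ + s₁ * g ^ n) :
    (X - C a) ^ 2 ∣ f := by
  have hs₀a : s₀.IsRoot a := by
    simpa [h, hg.eq_zero, zero_pow (by omega : n ≠ 0)] using hf
  have hgn : (X - C a) ^ 2 ∣ g ^ n :=
    (pow_dvd_pow_of_dvd (dvd_iff_isRoot.mpr hg) 2).trans (pow_dvd_pow g hn)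
  exact h ▸ dvd_add (hs₀.sq_dvd_of_isRoot hs₀a) (hgn.mul_left s₁)

end SumsOfSquares

theorem not_X_sub_one_sq_dvd_one_sub_X_sq : ¬ (X - C 1) ^ 2 ∣ (1 - X ^ 2 : ℝ[X]) := by
  rintro ⟨q, hq⟩
  have hfactor : (1 - X ^ 2 : ℝ[X]) = (X - C 1) * -(X + C 1) := by simp only [map_one]; ring
  rw [hfactor, sq, mul_assoc, mul_right_inj' (X_sub_C_ne_zero 1)] at hq
  have := congrArg (eval 1) hq
  norm_num at this

theorem one_sub_sq_nonneg_iff {x : ℝ} : 0 ≤ 1 - x ^ 2 ↔ x ∈ Set.Icc (-1) 1 := by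
  rw [sub_nonneg, sq_le_one_iff_abs_le_one, abs_le, Set.mem_Icc]

theorem one_sub_sq_eq_zero_iff {x : ℝ} : 1 - x ^ 2 = 0 ↔ x = -1 ∨ x = 1 := by
  rw [sub_eq_zero, eq_comm, sq_eq_one_iff, or_comm]

theorem stengle_counterexample :
    ({x : ℝ | 0 ≤ eval x ((1 - X ^ 2 : Polynomial ℝ) ^ 3)} = Set.Icc (-1 : ℝ) 1) ∧
    (∀ x ∈ Set.Icc (-1 : ℝ) 1, 0 ≤ eval x (1 - X ^ 2 : Polynomial ℝ)) ∧
    ({x ∈ Set.Icc (-1 : ℝ) 1 | eval x (1 - X ^ 2 : Polynomial ℝ) = 0} = {-1, 1}) ∧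
    ¬∃ s₀ s₁ : Polynomial ℝ, IsSumSq s₀ ∧ IsSumSq s₁ ∧
      (1 - X ^ 2 : Polynomial ℝ) = s₀ + s₁ * (1 - X ^ 2 : Polynomial ℝ) ^ 3 := by
  have hroot : (1 - X ^ 2 : ℝ[X]).IsRoot 1 := by simp
  refine ⟨?_, fun x hx => ?_, ?_, ?_⟩
  · ext x
    simp only [Set.mem_ofPred_eq, eval_pow, eval_sub, eval_one, eval_X,
      Odd.pow_nonneg_iff (by decide : Odd 3), one_sub_sq_nonneg_iff]
  · simpa using one_sub_sq_nonneg_iff.mpr hx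
  · ext x
    simp only [Set.mem_ofPred_eq, eval_sub, eval_one, eval_pow, eval_X, one_sub_sq_eq_zero_iff,
      Set.mem_insert_iff, Set.mem_singleton_iff, and_iff_right_iff_imp]
    rintro (rfl | rfl) <;> norm_num
  · rintro ⟨s₀, s₁, hs₀, -, h⟩
    exact not_X_sub_one_sq_dvd_one_sub_X_sq
      (sq_dvd_of_eq_add_mul_pow hs₀ hroot hroot (by norm_num) h)
end
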